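/- Let r ≥ 1 and let A_i, C_i ∈ ℂ^{m×m}, B_i, D_i ∈ ℂ^{n×n} for i = 1,…,r. Then the system A_i X_i B_i − C_i X_{i+1} D_i = 0 (i = 1,…,r−1), A_r X_r B_r − C_r conj(X_1) D_r = 0, in unknowns X_1,…,X_r ∈ ℂ^{m×n}, has only the trivial solution X_1 = ⋯ = X_r = 0 if and only if the system of 2r equations A_i X_i B_i − C_i X_{i+1} D_i = 0 (i = 1,…,r), conj(A_{i−r}) X_i conj(B_{i−r}) − conj(C_{i−r}) X_{i+1} conj(D_{i−r}) = 0 (i = r+1,…,2r−1), conj(A_r) X_{2r} conj(B_r) − conj(C_r) X_1 conj(D_r) = 0, in unknowns X_1,…,X_{2r} ∈ ℂ^{m×n}, has only the trivial solution X_1 = ⋯ = X_{2r} = 0. -/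
import Mathlib

open Matrix

private lemma cmap_cmap {m n : ℕ} (M : Matrix (Fin m) (Fin n) ℂ) :
    (M.map (starRingEnd ℂ)).map (starRingEnd ℂ) = M := by
  ext i j; simp

private lemma cmap_comp {m n : ℕ} (M : Matrix (Fin m) (Fin n) ℂ) :
    M.map (⇑(starRingEnd ℂ) ∘ ⇑(starRingEnd ℂ)) = M := by
  ext i j; simp

private lemma cmap_add {m n : ℕ} (M N : Matrix (Fin m) (Fin n) ℂ) :
    ((M + N).map (starRingEnd ℂ)) = M.map (starRingEnd ℂ) + N.map (starRingEnd ℂ) := by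
  ext i j; simp

private lemma cmap_sub {m n : ℕ} (M N : Matrix (Fin m) (Fin n) ℂ) :
    ((M - N).map (starRingEnd ℂ)) = M.map (starRingEnd ℂ) - N.map (starRingEnd ℂ) := by
  ext i j; simp

private lemma cmap_smul {m n : ℕ} (c : ℂ) (M : Matrix (Fin m) (Fin n) ℂ) :
    ((c • M).map (starRingEnd ℂ)) = (starRingEnd ℂ c) • M.map (starRingEnd ℂ) := by
  ext i j; simp

private lemma key {m n : ℕ} (A C : Matrix (Fin m) (Fin m) ℂ) (B D : Matrix (Fin n) (Fin n) ℂ)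
    (M N : Matrix (Fin m) (Fin n) ℂ)
    (h : A * M * B - C * N * D = 0) :
    A.map (starRingEnd ℂ) * M.map (starRingEnd ℂ) * B.map (starRingEnd ℂ)
      - C.map (starRingEnd ℂ) * N.map (starRingEnd ℂ) * D.map (starRingEnd ℂ) = 0 := by
  have := congrArg (fun M => M.map (starRingEnd ℂ)) h
  simpa [Matrix.map_sub, Matrix.map_mul] using this

private lemma key' {m n : ℕ} (A C : Matrix (Fin m) (Fin m) ℂ) (B D : Matrix (Fin n) (Fin n) ℂ)
    (M N : Matrix (Fin m) (Fin n) ℂ)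
    (h : A.map (starRingEnd ℂ) * M * B.map (starRingEnd ℂ)
      - C.map (starRingEnd ℂ) * N * D.map (starRingEnd ℂ) = 0) :
    A * M.map (starRingEnd ℂ) * B - C * N.map (starRingEnd ℂ) * D = 0 := by
  have := key _ _ _ _ _ _ h
  simpa [cmap_cmap, cmap_comp, Matrix.map_map] using this

/-- The periodic system with one conjugated unknown in its last equation has only the
trivial solution iff the associated doubled periodic system of `2r` generalized Sylvester
equations (whose second half has conjugated coefficients) has only the trivial solution. -/
theorem conj_periodic_unique_iff_doubled (r m n : ℕ) (hr : 0 < r)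
    (A C : Fin r → Matrix (Fin m) (Fin m) ℂ)
    (B D : Fin r → Matrix (Fin n) (Fin n) ℂ) :
    (∀ X : Fin r → Matrix (Fin m) (Fin n) ℂ,
        ((∀ i : Fin r, ∀ h : (i : ℕ) + 1 < r,
            A i * X i * B i - C i * X ⟨(i : ℕ) + 1, h⟩ * D i = 0) ∧
          A ⟨r - 1, by omega⟩ * X ⟨r - 1, by omega⟩ * B ⟨r - 1, by omega⟩
            - C ⟨r - 1, by omega⟩ * (X ⟨0, hr⟩).map (starRingEnd ℂ)
              * D ⟨r - 1, by omega⟩ = 0) → X = 0)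
      ↔
    (∀ Z : Fin (2 * r) → Matrix (Fin m) (Fin n) ℂ,
        ((∀ i : Fin r,
            A i * Z ⟨(i : ℕ), by have := i.isLt; omega⟩ * B i
              - C i * Z ⟨(i : ℕ) + 1, by have := i.isLt; omega⟩ * D i = 0) ∧
          (∀ i : Fin r, ∀ h : (i : ℕ) + 1 < r,
            (A i).map (starRingEnd ℂ) * Z ⟨r + (i : ℕ), by have := i.isLt; omega⟩
                * (B i).map (starRingEnd ℂ)
              - (C i).map (starRingEnd ℂ) * Z ⟨r + (i : ℕ) + 1, by omega⟩
                * (D i).map (starRingEnd ℂ) = 0) ∧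
          (A ⟨r - 1, by omega⟩).map (starRingEnd ℂ) * Z ⟨2 * r - 1, by omega⟩
              * (B ⟨r - 1, by omega⟩).map (starRingEnd ℂ)
            - (C ⟨r - 1, by omega⟩).map (starRingEnd ℂ) * Z ⟨0, by omega⟩
              * (D ⟨r - 1, by omega⟩).map (starRingEnd ℂ) = 0) → Z = 0) := by
  constructor
  · -- X-uniqueness → Z-uniqueness
    intro hX Z hZ
    obtain ⟨hZ1, hZ2, hZ3⟩ := hZ
    have Zext : ∀ (a b : ℕ) (ha : a < 2*r) (hb : b < 2*r), a = b → Z ⟨a, ha⟩ = Z ⟨b, hb⟩ := by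
      intro a b ha hb h; subst h; rfl
    -- normalized last equations
    have E1 : A ⟨r-1, by omega⟩ * Z ⟨r-1, by omega⟩ * B ⟨r-1, by omega⟩
        - C ⟨r-1, by omega⟩ * Z ⟨r, by omega⟩ * D ⟨r-1, by omega⟩ = 0 := by
      have := hZ1 ⟨r-1, by omega⟩
      simpa [Zext (r-1+1) r (by omega) (by omega) (by omega)] using this
    have E2 : A ⟨r-1, by omega⟩ * (Z ⟨2*r-1, by omega⟩).map (starRingEnd ℂ) * B ⟨r-1, by omega⟩
        - C ⟨r-1, by omega⟩ * (Z ⟨0, by omega⟩).map (starRingEnd ℂ) * D ⟨r-1, by omega⟩ = 0 :=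
      key' _ _ _ _ _ _ hZ3
    have main1 : (fun j : Fin r => Z ⟨(j:ℕ), by have := j.isLt; omega⟩
        + (Z ⟨r + (j:ℕ), by have := j.isLt; omega⟩).map (starRingEnd ℂ)) = 0 := by
      apply hX
      constructor
      · intro i h
        have e1 := hZ1 i
        have e2 := key' _ _ _ _ _ _ (hZ2 i h)
        have expand : A i * (Z ⟨(i:ℕ), by have := i.isLt; omega⟩
              + (Z ⟨r + (i:ℕ), by have := i.isLt; omega⟩).map (starRingEnd ℂ)) * B i
            - C i * (Z ⟨(i:ℕ) + 1, by omega⟩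
              + (Z ⟨r + ((i:ℕ) + 1), by omega⟩).map (starRingEnd ℂ)) * D i
            = (A i * Z ⟨(i:ℕ), by have := i.isLt; omega⟩ * B i
                - C i * Z ⟨(i:ℕ) + 1, by omega⟩ * D i)
              + (A i * (Z ⟨r + (i:ℕ), by have := i.isLt; omega⟩).map (starRingEnd ℂ) * B i
                - C i * (Z ⟨r + (i:ℕ) + 1, by omega⟩).map (starRingEnd ℂ) * D i) := by
          simp only [Matrix.mul_add, Matrix.add_mul]
          abel
        show A i * _ * B i - C i * _ * D i = 0
        rw [expand, e1, e2, add_zero]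
      · have e1 := E1
        have e2 := E2
        show A ⟨r-1, by omega⟩ * (Z ⟨r-1, by omega⟩
              + (Z ⟨r + (r-1), by omega⟩).map (starRingEnd ℂ)) * B ⟨r-1, by omega⟩
            - C ⟨r-1, by omega⟩ * ((Z ⟨0, by omega⟩
              + (Z ⟨r + 0, by omega⟩).map (starRingEnd ℂ)).map (starRingEnd ℂ))
              * D ⟨r-1, by omega⟩ = 0
        rw [Zext (r + (r-1)) (2*r-1) (by omega) (by omega) (by omega),
            Zext (r + 0) r (by omega) (by omega) (by omega)]
        have expand : A ⟨r-1, by omega⟩ * (Z ⟨r-1, by omega⟩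
              + (Z ⟨2*r-1, by omega⟩).map (starRingEnd ℂ)) * B ⟨r-1, by omega⟩
            - C ⟨r-1, by omega⟩ * ((Z ⟨0, by omega⟩
              + (Z ⟨r, by omega⟩).map (starRingEnd ℂ)).map (starRingEnd ℂ))
              * D ⟨r-1, by omega⟩
            = (A ⟨r-1, by omega⟩ * Z ⟨r-1, by omega⟩ * B ⟨r-1, by omega⟩
                - C ⟨r-1, by omega⟩ * Z ⟨r, by omega⟩ * D ⟨r-1, by omega⟩)
              + (A ⟨r-1, by omega⟩ * (Z ⟨2*r-1, by omega⟩).map (starRingEnd ℂ) * B ⟨r-1, by omega⟩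
                - C ⟨r-1, by omega⟩ * (Z ⟨0, by omega⟩).map (starRingEnd ℂ) * D ⟨r-1, by omega⟩) := by
          simp only [cmap_add, cmap_cmap, Matrix.mul_add, Matrix.add_mul]
          abel
        rw [expand, e1, e2, add_zero]
    have main2 : (fun j : Fin r => Complex.I • (Z ⟨(j:ℕ), by have := j.isLt; omega⟩
        - (Z ⟨r + (j:ℕ), by have := j.isLt; omega⟩).map (starRingEnd ℂ))) = 0 := by
      apply hX
      constructor
      · intro i h
        have e1 := hZ1 i
        have e2 := key' _ _ _ _ _ _ (hZ2 i h)
        have expand : A i * (Complex.I • (Z ⟨(i:ℕ), by have := i.isLt; omega⟩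
              - (Z ⟨r + (i:ℕ), by have := i.isLt; omega⟩).map (starRingEnd ℂ))) * B i
            - C i * (Complex.I • (Z ⟨(i:ℕ) + 1, by omega⟩
              - (Z ⟨r + ((i:ℕ) + 1), by omega⟩).map (starRingEnd ℂ))) * D i
            = Complex.I • ((A i * Z ⟨(i:ℕ), by have := i.isLt; omega⟩ * B i
                - C i * Z ⟨(i:ℕ) + 1, by omega⟩ * D i)
              - (A i * (Z ⟨r + (i:ℕ), by have := i.isLt; omega⟩).map (starRingEnd ℂ) * B i
                - C i * (Z ⟨r + (i:ℕ) + 1, by omega⟩).map (starRingEnd ℂ) * D i)) := by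
          simp only [Matrix.smul_mul, Matrix.mul_smul, Matrix.mul_sub, Matrix.sub_mul, smul_sub]
          abel
        show A i * _ * B i - C i * _ * D i = 0
        rw [expand, e1, e2, sub_zero, smul_zero]
      · show A ⟨r-1, by omega⟩ * (Complex.I • (Z ⟨r-1, by omega⟩
              - (Z ⟨r + (r-1), by omega⟩).map (starRingEnd ℂ))) * B ⟨r-1, by omega⟩
            - C ⟨r-1, by omega⟩ * ((Complex.I • (Z ⟨0, by omega⟩
              - (Z ⟨r + 0, by omega⟩).map (starRingEnd ℂ))).map (starRingEnd ℂ))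
              * D ⟨r-1, by omega⟩ = 0
        rw [Zext (r + (r-1)) (2*r-1) (by omega) (by omega) (by omega),
            Zext (r + 0) r (by omega) (by omega) (by omega)]
        have expand : A ⟨r-1, by omega⟩ * (Complex.I • (Z ⟨r-1, by omega⟩
              - (Z ⟨2*r-1, by omega⟩).map (starRingEnd ℂ))) * B ⟨r-1, by omega⟩
            - C ⟨r-1, by omega⟩ * ((Complex.I • (Z ⟨0, by omega⟩
              - (Z ⟨r, by omega⟩).map (starRingEnd ℂ))).map (starRingEnd ℂ))
              * D ⟨r-1, by omega⟩
            = Complex.I • ((A ⟨r-1, by omega⟩ * Z ⟨r-1, by omega⟩ * B ⟨r-1, by omega⟩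
                - C ⟨r-1, by omega⟩ * Z ⟨r, by omega⟩ * D ⟨r-1, by omega⟩)
              - (A ⟨r-1, by omega⟩ * (Z ⟨2*r-1, by omega⟩).map (starRingEnd ℂ) * B ⟨r-1, by omega⟩
                - C ⟨r-1, by omega⟩ * (Z ⟨0, by omega⟩).map (starRingEnd ℂ) * D ⟨r-1, by omega⟩)) := by
          simp only [cmap_smul, Complex.conj_I, cmap_sub, cmap_cmap,
            Matrix.smul_mul, Matrix.mul_smul, Matrix.mul_sub, Matrix.sub_mul, smul_sub, neg_smul,
            smul_neg, Matrix.mul_neg, Matrix.neg_mul, sub_neg_eq_add, Matrix.mul_add, Matrix.add_mul]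
          abel
        rw [expand, E1, E2, sub_zero, smul_zero]
    -- componentwise conclusions
    have hz : ∀ j : Fin r, Z ⟨(j:ℕ), by have := j.isLt; omega⟩ = 0
        ∧ Z ⟨r + (j:ℕ), by have := j.isLt; omega⟩ = 0 := by
      intro j
      have h1 := congrFun main1 j
      have h2 := congrFun main2 j
      simp only [Pi.zero_apply] at h1 h2
      have h2' : Z ⟨(j:ℕ), by have := j.isLt; omega⟩
          - (Z ⟨r + (j:ℕ), by have := j.isLt; omega⟩).map (starRingEnd ℂ) = 0 := by
        rcases smul_eq_zero.mp h2 with h | h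
        · exact absurd h Complex.I_ne_zero
        · exact h
      have hZj : Z ⟨(j:ℕ), by have := j.isLt; omega⟩ = 0 := by
        have : (2:ℂ) • Z ⟨(j:ℕ), by have := j.isLt; omega⟩ = 0 := by
          have := congrArg₂ (· + ·) h1 h2'
          simp only [add_zero] at this
          rw [← this]
          module
        rcases smul_eq_zero.mp this with h | h
        · norm_num at h
        · exact h
      refine ⟨hZj, ?_⟩
      have hc : (Z ⟨r + (j:ℕ), by have := j.isLt; omega⟩).map (starRingEnd ℂ) = 0 := by
        rw [hZj, zero_add] at h1
        exact h1
      have := congrArg (fun M => M.map (starRingEnd ℂ)) hc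
      simpa [cmap_cmap, cmap_comp, Matrix.map_map] using this
    funext k
    by_cases hk : (k:ℕ) < r
    · have := (hz ⟨(k:ℕ), hk⟩).1
      have hkk : k = ⟨(k:ℕ), by have := k.isLt; omega⟩ := Fin.ext rfl
      rw [hkk]; simpa using this
    · have := (hz ⟨(k:ℕ) - r, by have := k.isLt; omega⟩).2
      have hkk : k = ⟨r + ((k:ℕ) - r), by have := k.isLt; omega⟩ := Fin.ext (by simp; omega)
      rw [hkk]; simpa using this
  · -- Z-uniqueness → X-uniqueness
    intro hZ X hX
    obtain ⟨hX1, hX2⟩ := hX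
    have Xext : ∀ (a b : ℕ) (ha : a < r) (hb : b < r), a = b → X ⟨a, ha⟩ = X ⟨b, hb⟩ := by
      intro a b ha hb h; subst h; rfl
    set W : Fin (2*r) → Matrix (Fin m) (Fin n) ℂ := fun j => if h : (j:ℕ) < r then X ⟨(j:ℕ), h⟩
      else (X ⟨(j:ℕ) - r, by have := j.isLt; omega⟩).map (starRingEnd ℂ) with hWdef
    have hWlt : ∀ (a : ℕ) (ha : a < 2*r) (ha' : a < r), W ⟨a, ha⟩ = X ⟨a, ha'⟩ := by
      intro a ha ha'
      rw [hWdef]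
      exact dif_pos ha'
    have hWge : ∀ (a : ℕ) (ha : a < 2*r) (ha' : ¬ a < r),
        W ⟨a, ha⟩ = (X ⟨a - r, by omega⟩).map (starRingEnd ℂ) := by
      intro a ha ha'
      rw [hWdef]
      exact dif_neg ha'
    have main : W = 0 := by
      apply hZ
      refine ⟨?_, ?_, ?_⟩
      · intro i
        by_cases h : (i:ℕ) + 1 < r
        · rw [hWlt (i:ℕ) (by have := i.isLt; omega) i.isLt,
              hWlt ((i:ℕ)+1) (by omega) h]
          simpa only [Fin.eta] using hX1 i h
        · have hi : (i:ℕ) = r - 1 := by have := i.isLt; omega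
          rw [hWlt (i:ℕ) (by have := i.isLt; omega) i.isLt,
              hWge ((i:ℕ)+1) (by have := i.isLt; omega) (by omega),
              Xext ((i:ℕ)+1-r) 0 (by have := i.isLt; omega) hr (by omega)]
          have e := hX2
          rw [show (⟨r-1, by omega⟩ : Fin r) = i from Fin.ext (by simp [hi])] at e
          simpa only [Fin.eta] using e
      · intro i h
        rw [hWge (r + (i:ℕ)) (by have := i.isLt; omega) (by omega),
            hWge (r + (i:ℕ) + 1) (by omega) (by omega),
            Xext (r + (i:ℕ) - r) (i:ℕ) (by have := i.isLt; omega) i.isLt (by omega),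
            Xext (r + (i:ℕ) + 1 - r) ((i:ℕ)+1) (by omega) h (by omega)]
        have e := key _ _ _ _ _ _ (hX1 i h)
        simpa only [Fin.eta] using e
      · rw [hWge (2*r - 1) (by omega) (by omega),
            hWlt 0 (by omega) hr,
            Xext (2*r-1-r) (r-1) (by omega) (by omega) (by omega)]
        have e := key _ _ _ _ _ _ hX2
        simpa only [cmap_cmap, Matrix.map_map, cmap_comp] using e
    funext j
    have hj := congrFun main ⟨(j:ℕ), by have := j.isLt; omega⟩
    rw [hWlt (j:ℕ) (by have := j.isLt; omega) j.isLt] at hj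
    simpa only [Fin.eta, Pi.zero_apply] using hj
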